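/- arXiv:1811.04485 — 7 statements merged into one kernel-verified Lean document; each statement's English description precedes it below -/
import Mathlib

section
/- Let Σ be a simplicial complex, let Σ' ⊆ Σ be upward closed in Σ, and let (σ, τ) be a coreduction pair in Σ'. Then σ has no immediate face in Σ', i.e. bd_{Σ'}(σ) = ∅. (Core claim of Lemma 1: in a coreduction-based algorithm the smaller simplex of any feasible coreduction pair is free.) -/
open Finset

variable {α : Type*}

/-- `σ` is an immediate face of `τ`. -/
def ImmFace (σ τ : Finset α) : Prop :=
  σ ⊆ τ ∧ σ.card + 1 = τ.card

/-- A simplicial complex: a family of nonempty finsets closed under nonempty subsets. -/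
def IsComplex (S : Set (Finset α)) : Prop :=
  (∀ σ ∈ S, σ.Nonempty) ∧ ∀ τ ∈ S, ∀ σ : Finset α, σ ⊆ τ → σ.Nonempty → σ ∈ S

/-- Immediate boundary of `τ` in the family `S`. -/
def bd (S : Set (Finset α)) (τ : Finset α) : Set (Finset α) :=
  {σ ∈ S | ImmFace σ τ}

/-- Immediate coboundary of `σ` in the family `S`. -/
def cbd (S : Set (Finset α)) (σ : Finset α) : Set (Finset α) :=
  {τ ∈ S | ImmFace σ τ}

/-- `(σ, τ)` is a coreduction pair in `S`. -/
def CoredPair (S : Set (Finset α)) (σ τ : Finset α) : Prop :=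
  σ ∈ S ∧ τ ∈ S ∧ ImmFace σ τ ∧ bd S τ = {σ}

/-- `(σ, τ)` is a reduction pair in `S`. -/
def RedPair (S : Set (Finset α)) (σ τ : Finset α) : Prop :=
  σ ∈ S ∧ τ ∈ S ∧ ImmFace σ τ ∧ cbd S σ = {τ}

/-- `σ` is a free simplex in `S`. -/
def FreeSimplex (S : Set (Finset α)) (σ : Finset α) : Prop :=
  σ ∈ S ∧ bd S σ = ∅

/-- `σ` is a top simplex in `S`. -/
def TopSimplex (S : Set (Finset α)) (σ : Finset α) : Prop :=
  σ ∈ S ∧ cbd S σ = ∅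

/-- `S'` is an upward-closed subfamily of `S`. -/
def UpClosedIn (S S' : Set (Finset α)) : Prop :=
  S' ⊆ S ∧ ∀ σ ∈ S', ∀ τ ∈ S, σ ⊆ τ → τ ∈ S'

/-- An operation: removal of a pair of simplices, or of a single simplex. -/
abbrev Op (α : Type*) := (Finset α × Finset α) ⊕ Finset α

/-- Excise the simplices of an operation from a family. -/
def removeOp (S : Set (Finset α)) : Op α → Set (Finset α)
  | Sum.inl (σ, τ) => S \ {σ, τ}
  | Sum.inr σ => S \ {σ}

/-- Remaining family after performing a list of operations in order. -/
def remaining (S : Set (Finset α)) (L : List (Op α)) : Set (Finset α) :=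
  L.foldl removeOp S

/-- A coreduction-based removal sequence: every pair is a coreduction pair and
every single simplex is free, in the current remaining family. -/
def IsCoredSeq (S : Set (Finset α)) : List (Op α) → Prop
  | [] => True
  | o :: L =>
      (match o with
        | Sum.inl (σ, τ) => CoredPair S σ τ
        | Sum.inr σ => FreeSimplex S σ) ∧ IsCoredSeq (removeOp S o) L

/-- A reduction-based removal sequence: every pair is a reduction pair and
every single simplex is top, in the current remaining family. -/
def IsRedSeq (S : Set (Finset α)) : List (Op α) → Prop
  | [] => True
  | o :: L =>
      (match o with
        | Sum.inl (σ, τ) => RedPair S σ τ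
        | Sum.inr σ => TopSimplex S σ) ∧ IsRedSeq (removeOp S o) L

/-- A valid interleaved removal sequence: every pair is a coreduction or
reduction pair, and every single simplex is free or top, in the current
remaining family. -/
def IsInterSeq (S : Set (Finset α)) : List (Op α) → Prop
  | [] => True
  | o :: L =>
      (match o with
        | Sum.inl (σ, τ) => CoredPair S σ τ ∨ RedPair S σ τ
        | Sum.inr σ => FreeSimplex S σ ∨ TopSimplex S σ) ∧ IsInterSeq (removeOp S o) L

/-- A discrete vector field on `S`: pairs (face, immediate coface) of simplices of `S`,
each simplex of `S` belonging to at most one pair. -/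
def IsDVF (S : Set (Finset α)) (V : Set (Finset α × Finset α)) : Prop :=
  (∀ p ∈ V, p.1 ∈ S ∧ p.2 ∈ S ∧ ImmFace p.1 p.2) ∧
  ∀ σ ∈ S, ∀ p ∈ V, ∀ q ∈ V,
    (σ = p.1 ∨ σ = p.2) → (σ = q.1 ∨ σ = q.2) → p = q

/-- A `V`-path: a nonempty sequence of pairs of `V` such that each `σ_{i+1}` is an
immediate face of `τ_i` different from `σ_i`. -/
def IsVPath (V : Set (Finset α × Finset α)) (P : List (Finset α × Finset α)) : Prop :=
  P ≠ [] ∧ (∀ p ∈ P, p ∈ V) ∧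
  P.Chain' (fun p q => ImmFace q.1 p.2 ∧ q.1 ≠ p.1)

/-- A closed `V`-path: `σ_1` is an immediate face of `τ_r` different from `σ_r`. -/
def IsClosedVPath (V : Set (Finset α × Finset α))
    (P : List (Finset α × Finset α)) : Prop :=
  ∃ hne : P ≠ [], IsVPath V P ∧
    ImmFace (P.head hne).1 (P.getLast hne).2 ∧
    (P.head hne).1 ≠ (P.getLast hne).1

/-- The lower star of a vertex `v` with respect to a vertex function `F`. -/
def lowerStar (S : Set (Finset α)) (F : α → ℝ) (v : α) : Set (Finset α) :=
  {σ ∈ S | v ∈ σ ∧ ∀ w ∈ σ, F v ≤ F w}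

/-! Write `τ = insert x σ`. Any immediate face `ρ` of `σ` in `S'` would give a second immediate
face `insert x ρ ≠ σ` of `τ`, which lies in `S'` because it sits between `ρ ∈ S'` and `τ` and
`S'` is upward closed in the complex `S`. -/

section

variable {S S' : Set (Finset α)} {ρ σ τ : Finset α}

theorem UpClosedIn.mem_of_subset_of_subset (hS : IsComplex S) (hup : UpClosedIn S S')
    (hρ : ρ ∈ S') (hτ : τ ∈ S') (hρσ : ρ ⊆ σ) (hστ : σ ⊆ τ) : σ ∈ S' :=
  hup.2 ρ hρ σ (hS.2 τ (hup.1 hτ) σ hστ ((hS.1 ρ (hup.1 hρ)).mono hρσ)) hρσ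

variable [DecidableEq α] {x : α}

theorem ImmFace.exists_insert_eq (h : ImmFace σ τ) : ∃ x ∉ σ, insert x σ = τ :=
  covBy_iff_exists_insert.1 <| covBy_iff_card_sdiff_eq_one.2
    ⟨h.1, by rw [card_sdiff_of_subset h.1, ← h.2, add_tsub_cancel_left]⟩

theorem ImmFace.insert (h : ImmFace ρ σ) (hx : x ∉ σ) : ImmFace (insert x ρ) (insert x σ) :=
  ⟨insert_subset_insert x h.1, by
    rw [card_insert_of_notMem hx, card_insert_of_notMem fun hxρ ↦ hx (h.1 hxρ), h.2]⟩

theorem insert_mem_bd_insert (hS : IsComplex S) (hup : UpClosedIn S S') (hρ : ρ ∈ bd S' σ)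
    (hxσ : insert x σ ∈ S') (hx : x ∉ σ) : insert x ρ ∈ bd S' (insert x σ) :=
  have hface : ImmFace (insert x ρ) (insert x σ) := hρ.2.insert hx
  ⟨hup.mem_of_subset_of_subset hS hρ.1 hxσ (subset_insert x ρ) hface.1, hface⟩

end

/-- Core claim of Lemma 1: if `S'` is upward closed in the simplicial complex `S`
and `(σ, τ)` is a coreduction pair in `S'`, then `σ` has empty immediate boundary
in `S'`. -/
theorem coreduction_smaller_is_free {α : Type*} [DecidableEq α]
    (S S' : Set (Finset α)) (hS : IsComplex S) (hup : UpClosedIn S S')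
    (σ τ : Finset α) (h : CoredPair S' σ τ) :
    bd S' σ = ∅ := by
  obtain ⟨-, hτ, hστ, hbd⟩ := h
  obtain ⟨x, hx, rfl⟩ := hστ.exists_insert_eq
  refine Set.eq_empty_of_forall_notMem fun ρ hρ ↦ hx ?_
  have hρx : insert x ρ = σ := by
    simpa [hbd] using insert_mem_bd_insert hS hup hρ hτ hx
  exact hρx ▸ mem_insert_self x ρ
end

section
/- Let Σ be a simplicial complex, let Σ' ⊆ Σ be upward closed in Σ, and let (σ, τ) be a coreduction pair in Σ'. Then Σ' \ {σ, τ} is again upward closed in Σ. (Excising a coreduction pair preserves the S-complex invariant maintained by a coreduction-based algorithm.) -/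
open Finset

variable {α : Type*}

/-! If `ρ ∈ S'` lies strictly inside `τ`, then for every `x ∈ τ \ ρ` the face `τ.erase x`
contains `ρ`, so it lies in `S'` by upward closedness and is an immediate face of `τ` there, hence
equals `σ`. As `x ↦ τ.erase x` is injective, `τ \ ρ` is a single point and `ρ = σ`. So a simplex
of `S'` other than `σ` and `τ` lies neither in `σ` nor in `τ`, and everything above it survives
the excision. -/

theorem ImmFace.ssubset {σ τ : Finset α} (h : ImmFace σ τ) : σ ⊂ τ :=
  h.1.ssubset_of_ne (ne_of_apply_ne card (by have := h.2; omega))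

section

variable [DecidableEq α] {S S' : Set (Finset α)} {σ τ ρ : Finset α}

theorem UpClosedIn.erase_mem_bd (hS : IsComplex S) (hup : UpClosedIn S S') (hτ : τ ∈ S')
    (hρ : ρ ∈ S') (hρτ : ρ ⊆ τ) {x : α} (hx : x ∈ τ) (hxρ : x ∉ ρ) :
    τ.erase x ∈ bd S' τ := by
  have hρx : ρ ⊆ τ.erase x := subset_erase.2 ⟨hρτ, hxρ⟩
  have hxS : τ.erase x ∈ S :=
    hS.2 τ (hup.1 hτ) _ (erase_subset x τ) ((hS.1 ρ (hup.1 hρ)).mono hρx)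
  exact ⟨hup.2 ρ hρ _ hxS hρx, erase_subset x τ, card_erase_add_one hx⟩

theorem CoredPair.eq_of_ssubset (hS : IsComplex S) (hup : UpClosedIn S S')
    (h : CoredPair S' σ τ) (hρ : ρ ∈ S') (hρτ : ρ ⊂ τ) : ρ = σ := by
  have erase_eq : ∀ x ∈ τ, x ∉ ρ → τ.erase x = σ := fun x hx hxρ => by
    simpa [h.2.2.2] using hup.erase_mem_bd hS h.2.1 hρ hρτ.subset hx hxρ
  obtain ⟨x, hx, hxρ⟩ := exists_of_ssubset hρτ
  rw [← erase_eq x hx hxρ]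
  by_contra hne
  obtain ⟨y, hy, hyρ⟩ :=
    exists_of_ssubset ((subset_erase.2 ⟨hρτ.subset, hxρ⟩).ssubset_of_ne hne)
  have hyx : y = x := erase_injOn τ (mem_of_mem_erase hy) hx
    ((erase_eq y (mem_of_mem_erase hy) hyρ).trans (erase_eq x hx hxρ).symm)
  exact ne_of_mem_erase hy hyx

end

/-- Excising a coreduction pair preserves upward closedness in the ambient
simplicial complex. -/
theorem coreduction_preserves_upClosed {α : Type*} [DecidableEq α]
    (S S' : Set (Finset α)) (hS : IsComplex S) (hup : UpClosedIn S S')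
    (σ τ : Finset α) (h : CoredPair S' σ τ) :
    UpClosedIn S (S' \ {σ, τ}) := by
  refine ⟨fun ρ hρ => hup.1 hρ.1, ?_⟩
  rintro ρ ⟨hρ, hρστ⟩ μ hμ hρμ
  simp only [Set.mem_sdiff, Set.mem_insert_iff, Set.mem_singleton_iff, not_or] at hρστ ⊢
  refine ⟨hup.2 ρ hρ μ hμ hρμ, ?_, ?_⟩
  · rintro rfl
    exact hρστ.1 (h.eq_of_ssubset hS hup hρ (hρμ.trans_ssubset h.2.2.1.ssubset))
  · rintro rfl
    exact hρστ.1 (h.eq_of_ssubset hS hup hρ (hρμ.ssubset_of_ne hρστ.2))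
end

section
/- Let Σ be a simplicial complex, let Σ' ⊆ Σ be upward closed in Σ, and let σ ∈ Σ' be free in Σ' (i.e. bd_{Σ'}(σ) = ∅). Then Σ' \ {σ} is again upward closed in Σ. (Excising a free simplex preserves the S-complex invariant maintained by a coreduction-based algorithm.) -/
open Finset

variable {α : Type*}

theorem ImmFace.erase [DecidableEq α] {τ : Finset α} {a : α} (ha : a ∈ τ) :
    ImmFace (τ.erase a) τ :=
  ⟨τ.erase_subset a, Finset.card_erase_add_one ha⟩

theorem exists_immFace_superset_of_ssubset {ρ τ : Finset α} (h : ρ ⊂ τ) :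
    ∃ μ, ImmFace μ τ ∧ ρ ⊆ μ := by
  classical
  obtain ⟨a, ha, hρ⟩ := Finset.ssubset_iff_exists_subset_erase.1 h
  exact ⟨τ.erase a, ImmFace.erase ha, hρ⟩

theorem UpClosedIn.bd_nonempty_of_ssubset {S S' : Set (Finset α)} (hS : IsComplex S)
    (hup : UpClosedIn S S') {ρ τ : Finset α} (hρ : ρ ∈ S') (hτ : τ ∈ S) (h : ρ ⊂ τ) :
    (bd S' τ).Nonempty := by
  obtain ⟨μ, hμτ, hρμ⟩ := exists_immFace_superset_of_ssubset h
  have hμ : μ ∈ S := hS.2 τ hτ μ hμτ.1 ((hS.1 ρ (hup.1 hρ)).mono hρμ)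
  exact ⟨μ, hup.2 ρ hρ μ hμ hρμ, hμτ⟩

theorem FreeSimplex.eq_of_subset {S S' : Set (Finset α)} (hS : IsComplex S)
    (hup : UpClosedIn S S') {σ ρ : Finset α} (hσ : FreeSimplex S' σ) (hρ : ρ ∈ S')
    (hρσ : ρ ⊆ σ) : ρ = σ := by
  by_contra hne
  have := hup.bd_nonempty_of_ssubset hS hρ (hup.1 hσ.1) (hρσ.ssubset_of_ne hne)
  exact this.ne_empty hσ.2

theorem free_removal_preserves_upClosed_general {α : Type*}
    (S S' : Set (Finset α)) (hS : IsComplex S) (hup : UpClosedIn S S')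
    (σ : Finset α) (h : FreeSimplex S' σ) :
    UpClosedIn S (S' \ {σ}) := by
  refine ⟨Set.sdiff_subset.trans hup.1, fun ρ ⟨hρ, hρσ⟩ τ hτ hρτ => ⟨hup.2 ρ hρ τ hτ hρτ, ?_⟩⟩
  rintro rfl
  exact hρσ (h.eq_of_subset hS hup hρ hρτ)

/-- Excising a free simplex preserves upward closedness in the ambient simplicial
complex. -/
theorem free_removal_preserves_upClosed {α : Type*} [DecidableEq α]
    (S S' : Set (Finset α)) (hS : IsComplex S) (hup : UpClosedIn S S')
    (σ : Finset α) (h : FreeSimplex S' σ) :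
    UpClosedIn S (S' \ {σ}) :=
  free_removal_preserves_upClosed_general S S' hS hup σ h
end

section
/- Let Σ' be a simplicial complex (a downward closed family of nonempty finsets) and let (σ, τ) be a reduction pair in Σ'. Then τ has no immediate coface in Σ', i.e. cbd_{Σ'}(τ) = ∅. (Core claim of Lemma 2: in a reduction-based algorithm the larger simplex of any feasible reduction pair is a top simplex.) -/
open Finset

variable {α : Type*}

theorem immFace_cons {σ : Finset α} {x : α} (hx : x ∉ σ) : ImmFace σ (σ.cons x hx) :=
  ⟨Finset.subset_cons hx, (Finset.card_cons hx).symm⟩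

theorem IsComplex.cons_mem_cbd {S : Set (Finset α)} (hS : IsComplex S) {σ ρ : Finset α}
    (hρ : ρ ∈ S) (hσρ : σ ⊆ ρ) {x : α} (hxρ : x ∈ ρ) (hxσ : x ∉ σ) :
    σ.cons x hxσ ∈ cbd S σ :=
  ⟨hS.2 ρ hρ _ (Finset.cons_subset.2 ⟨hxρ, hσρ⟩) (Finset.cons_nonempty hxσ), immFace_cons hxσ⟩

/-- A coface `ρ` of `τ` contains a vertex `x ∉ τ`, and `σ ∪ {x}` is then a second immediate
coface of `σ`. -/
theorem reduction_larger_is_top_general {α : Type*}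
    (S' : Set (Finset α)) (hS' : IsComplex S')
    (σ τ : Finset α) (h : RedPair S' σ τ) :
    cbd S' τ = ∅ := by
  obtain ⟨-, -, ⟨hστ, -⟩, hcbd⟩ := h
  refine Set.eq_empty_iff_forall_notMem.2 fun ρ hρ => ?_
  obtain ⟨x, hxρ, hxτ⟩ := Finset.exists_of_ssubset hρ.2.ssubset
  have hxσ : x ∉ σ := fun hx => hxτ (hστ hx)
  have hcons : σ.cons x hxσ ∈ cbd S' σ := hS'.cons_mem_cbd hρ.1 (hστ.trans hρ.2.1) hxρ hxσ
  rw [hcbd, Set.mem_singleton_iff] at hcons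
  exact hxτ (hcons ▸ Finset.mem_cons_self x σ)

/-- Core claim of Lemma 2: if `(σ, τ)` is a reduction pair in a simplicial complex
`S'`, then `τ` has empty immediate coboundary in `S'`. -/
theorem reduction_larger_is_top {α : Type*} [DecidableEq α]
    (S' : Set (Finset α)) (hS' : IsComplex S')
    (σ τ : Finset α) (h : RedPair S' σ τ) :
    cbd S' τ = ∅ :=
  reduction_larger_is_top_general S' hS' σ τ h
end

section
/- Let Σ' be a simplicial complex (a downward closed family of nonempty finsets) and let (σ, τ) be a reduction pair in Σ'. Then Σ' \ {σ, τ} is again a simplicial complex, i.e. it is still closed under taking nonempty subsets of its members. (Excising a reduction pair preserves the simplicial complex invariant maintained by a reduction-based algorithm.) -/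
open Finset

variable {α : Type*}

/-! If `(σ, τ)` is a reduction pair of a complex `S` and `σ ⊊ ρ ∈ S`, then for each
`a ∈ ρ \ σ` the face `insert a σ` of `ρ` is an immediate coface of `σ` in `S`, hence equals `τ`;
so `σ` and `τ` are the only members of `S` containing `σ`. A member of `S \ {σ, τ}` therefore
cannot have `σ` or `τ` as a face. -/

theorem IsComplex.insert_mem_cbd [DecidableEq α] {S : Set (Finset α)} (hS : IsComplex S)
    {σ τ : Finset α} {a : α} (hτ : τ ∈ S) (hστ : σ ⊆ τ) (haτ : a ∈ τ) (haσ : a ∉ σ) :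
    insert a σ ∈ cbd S σ :=
  ⟨hS.2 τ hτ _ (insert_subset haτ hστ) (insert_nonempty a σ), subset_insert a σ,
    (card_insert_of_notMem haσ).symm⟩

theorem RedPair.eq_or_eq_of_subset {S : Set (Finset α)} (hS : IsComplex S) {σ τ : Finset α}
    (h : RedPair S σ τ) {ρ : Finset α} (hρ : ρ ∈ S) (hσρ : σ ⊆ ρ) : ρ = σ ∨ ρ = τ := by
  classical
  obtain ⟨-, -, ⟨hστ, -⟩, hcbd⟩ := h
  have insert_eq : ∀ a ∈ ρ, a ∉ σ → insert a σ = τ := fun a haρ haσ => by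
    simpa [hcbd] using hS.insert_mem_cbd hρ hσρ haρ haσ
  rcases hσρ.eq_or_ssubset with rfl | hss
  · exact .inl rfl
  obtain ⟨a, haρ, haσ⟩ := exists_of_ssubset hss
  refine .inr (Subset.antisymm (fun b hbρ => ?_) ?_)
  · by_cases hbσ : b ∈ σ
    · exact hστ hbσ
    · exact insert_eq b hbρ hbσ ▸ mem_insert_self b σ
  · exact insert_eq a haρ haσ ▸ insert_subset haρ hσρ

theorem reduction_preserves_complex_general {α : Type*}
    (S' : Set (Finset α)) (hS' : IsComplex S')
    (σ τ : Finset α) (h : RedPair S' σ τ) :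
    IsComplex (S' \ {σ, τ}) := by
  refine ⟨fun ρ hρ => hS'.1 ρ hρ.1, ?_⟩
  rintro ρ ⟨hρ, hρστ⟩ π hπρ hπ
  refine ⟨hS'.2 ρ hρ π hπρ hπ, fun hπστ => hρστ ?_⟩
  have hσπ : σ ⊆ π := by
    rcases hπστ with rfl | rfl
    exacts [Subset.rfl, h.2.2.1.1]
  exact h.eq_or_eq_of_subset hS' hρ (hσπ.trans hπρ)

/-- Excising a reduction pair from a simplicial complex yields again a simplicial
complex (closed under taking nonempty subsets of its members). -/
theorem reduction_preserves_complex {α : Type*} [DecidableEq α]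
    (S' : Set (Finset α)) (hS' : IsComplex S')
    (σ τ : Finset α) (h : RedPair S' σ τ) :
    IsComplex (S' \ {σ, τ}) :=
  reduction_preserves_complex_general S' hS' σ τ h
end

section
/- Let Σ be a finite simplicial complex and let L be an exhausting reduction-based removal sequence on Σ. Then the reversed list of L is an exhausting coreduction-based removal sequence on Σ: starting again from remaining family Σ, each pair occurring in the reversed list is a coreduction pair in the current remaining family, and each single simplex occurring in the reversed list is free in the current remaining family. In particular, the same set of pairs (hence the same Forman gradient) and the same set of single (critical) simplices are produced. (Proposition 1, forward direction.) -/
open Finset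

variable {α : Type*}

/-! A simplex removed by a reduction step has no coface left other than its partner, so the
removed simplices form an upward-closed subfamily. Removing an upward-closed subfamily changes no
boundary of the simplices that stay, so, by induction, the reversed tail of the sequence is a
coreduction sequence on `S` that leaves exactly the simplices of the first step; these are then a
coreduction pair (resp. a free simplex) of what remains. -/

variable {S A : Set (Finset α)} {σ τ ρ : Finset α}

lemma immFace_irrefl (σ : Finset α) : ¬ ImmFace σ σ := by
  rintro ⟨_, h⟩
  omega

lemma IsComplex.sdiff (hS : IsComplex S) (hA : UpClosedIn S A) : IsComplex (S \ A) :=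
  ⟨fun σ hσ => hS.1 σ hσ.1, fun _ hτ σ hστ hσ =>
    ⟨hS.2 _ hτ.1 σ hστ hσ, fun hσA => hτ.2 (hA.2 σ hσA _ hτ.1 hστ)⟩⟩

lemma IsComplex.eq_or_mem_cbd_of_subset (hS : IsComplex S) (hcbd : (cbd S σ).Subsingleton)
    (hρ : ρ ∈ S) (hσρ : σ ⊆ ρ) : ρ = σ ∨ ρ ∈ cbd S σ := by
  classical
  have hins : ∀ x ∈ ρ \ σ, insert x σ ∈ cbd S σ := fun x hx =>
    ⟨hS.2 ρ hρ _ (insert_subset (mem_sdiff.1 hx).1 hσρ) (insert_nonempty _ _),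
      subset_insert _ _, (card_insert_of_notMem (mem_sdiff.1 hx).2).symm⟩
  have hle : (ρ \ σ).card ≤ 1 := card_le_one.2 fun x hx y hy =>
    (insert_inj (mem_sdiff.1 hx).2).1 (hcbd (hins x hx) (hins y hy))
  rcases Nat.le_one_iff_eq_zero_or_eq_one.1 hle with h0 | h1
  · exact Or.inl (Subset.antisymm (sdiff_eq_empty_iff_subset.1 (card_eq_zero.1 h0)) hσρ)
  · exact Or.inr ⟨hρ, hσρ, by rw [card_sdiff_of_subset hσρ] at h1; omega⟩

lemma RedPair.upClosedIn (hS : IsComplex S) (h : RedPair S σ τ) : UpClosedIn S {σ, τ} := by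
  obtain ⟨hσ, hτ, hστ, hcbd⟩ := h
  have hup : ∀ ρ ∈ S, σ ⊆ ρ → ρ ∈ ({σ, τ} : Set (Finset α)) := fun ρ hρ hσρ => by
    simpa [hcbd] using hS.eq_or_mem_cbd_of_subset (hcbd ▸ Set.subsingleton_singleton) hρ hσρ
  refine ⟨Set.insert_subset hσ (Set.singleton_subset_iff.2 hτ), ?_⟩
  rintro _ (rfl | rfl) ρ hρ hρ'
  exacts [hup ρ hρ hρ', hup ρ hρ (hστ.1.trans hρ')]

lemma TopSimplex.upClosedIn (hS : IsComplex S) (h : TopSimplex S σ) : UpClosedIn S {σ} := by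
  obtain ⟨hσ, hcbd⟩ := h
  refine ⟨Set.singleton_subset_iff.2 hσ, ?_⟩
  rintro _ rfl ρ hρ hσρ
  simpa [hcbd] using hS.eq_or_mem_cbd_of_subset (hcbd ▸ Set.subsingleton_empty) hρ hσρ

lemma UpClosedIn.sdiff_of_disjoint (hA : UpClosedIn S A) {B : Set (Finset α)}
    (hB : Disjoint B A) : UpClosedIn (S \ B) A :=
  ⟨Set.subset_sdiff.2 ⟨hA.1, hB.symm⟩, fun σ hσ τ hτ hστ => hA.2 σ hσ τ hτ.1 hστ⟩

lemma bd_sdiff_of_upClosedIn (hA : UpClosedIn S A) (hτ : τ ∈ S \ A) :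
    bd (S \ A) τ = bd S τ :=
  Set.ext fun _ => ⟨fun ⟨hρ, hρτ⟩ => ⟨hρ.1, hρτ⟩,
    fun ⟨hρ, hρτ⟩ => ⟨⟨hρ, fun hρA => hτ.2 (hA.2 _ hρA τ hτ.1 hρτ.1)⟩, hρτ⟩⟩

lemma CoredPair.of_sdiff (hA : UpClosedIn S A) (h : CoredPair (S \ A) σ τ) :
    CoredPair S σ τ :=
  ⟨h.1.1, h.2.1.1, h.2.2.1, bd_sdiff_of_upClosedIn hA h.2.1 ▸ h.2.2.2⟩

lemma FreeSimplex.of_sdiff (hA : UpClosedIn S A) (h : FreeSimplex (S \ A) σ) :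
    FreeSimplex S σ :=
  ⟨h.1.1, bd_sdiff_of_upClosedIn hA h.1 ▸ h.2⟩

lemma coredPair_pair (hστ : ImmFace σ τ) : CoredPair {σ, τ} σ τ := by
  refine ⟨Or.inl rfl, Or.inr rfl, hστ, Set.ext fun ρ => ⟨?_, ?_⟩⟩
  · rintro ⟨rfl | rfl, hρ⟩
    exacts [rfl, absurd hρ (immFace_irrefl ρ)]
  · rintro rfl
    exact ⟨Or.inl rfl, hστ⟩

lemma freeSimplex_singleton (σ : Finset α) : FreeSimplex {σ} σ :=
  ⟨rfl, Set.eq_empty_of_forall_notMem fun _ ⟨hρ, hρσ⟩ => immFace_irrefl σ (hρ ▸ hρσ)⟩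

def Op.simplices : Op α → Set (Finset α)
  | Sum.inl (σ, τ) => {σ, τ}
  | Sum.inr σ => {σ}

lemma removeOp_eq_sdiff (S : Set (Finset α)) (o : Op α) : removeOp S o = S \ o.simplices := by
  rcases o with ⟨σ, τ⟩ | σ <;> rfl

lemma remaining_cons (S : Set (Finset α)) (o : Op α) (L : List (Op α)) :
    remaining S (o :: L) = remaining (removeOp S o) L :=
  rfl

lemma remaining_append (S : Set (Finset α)) (L M : List (Op α)) :
    remaining S (L ++ M) = remaining (remaining S L) M :=
  List.foldl_append ..

lemma IsCoredSeq.append {L M : List (Op α)} (hL : IsCoredSeq S L)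
    (hM : IsCoredSeq (remaining S L) M) : IsCoredSeq S (L ++ M) := by
  induction L generalizing S with
  | nil => exact hM
  | cons o L ih => exact ⟨hL.1, ih hL.2 hM⟩

lemma IsCoredSeq.simplices_subset {o : Op α} (h : IsCoredSeq S [o]) : o.simplices ⊆ S := by
  rcases o with ⟨σ, τ⟩ | σ
  exacts [Set.insert_subset h.1.1 (Set.singleton_subset_iff.2 h.1.2.1),
    Set.singleton_subset_iff.2 h.1.1]

lemma IsRedSeq.upClosedIn_simplices (hS : IsComplex S) {o : Op α} (h : IsRedSeq S [o]) :
    UpClosedIn S o.simplices := by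
  rcases o with ⟨σ, τ⟩ | σ
  exacts [RedPair.upClosedIn hS h.1, TopSimplex.upClosedIn hS h.1]

lemma IsRedSeq.isCoredSeq_simplices {o : Op α} (h : IsRedSeq S [o]) :
    IsCoredSeq o.simplices [o] := by
  rcases o with ⟨σ, τ⟩ | σ
  exacts [⟨coredPair_pair h.1.2.2.1, trivial⟩, ⟨freeSimplex_singleton σ, trivial⟩]

lemma IsCoredSeq.of_sdiff_upClosedIn {L : List (Op α)} (hA : UpClosedIn S A)
    (hL : IsCoredSeq (S \ A) L) :
    IsCoredSeq S L ∧ remaining S L = remaining (S \ A) L ∪ A := by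
  induction L generalizing S with
  | nil => exact ⟨trivial, (Set.sdiff_union_of_subset hA.1).symm⟩
  | cons o L ih =>
    obtain ⟨ho, hL⟩ := hL
    have hdisj : Disjoint o.simplices A :=
      (Set.subset_sdiff.1 (IsCoredSeq.simplices_subset ⟨ho, trivial⟩)).2
    have hremove : removeOp (S \ A) o = removeOp S o \ A := by
      simp only [removeOp_eq_sdiff, Set.sdiff_sdiff_comm]
    rw [hremove] at hL
    obtain ⟨hL', hrem⟩ := ih (removeOp_eq_sdiff S o ▸ hA.sdiff_of_disjoint hdisj) hL
    refine ⟨⟨?_, hL'⟩, by rwa [remaining_cons, remaining_cons, hremove]⟩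
    rcases o with ⟨σ, τ⟩ | σ
    exacts [CoredPair.of_sdiff hA ho, FreeSimplex.of_sdiff hA ho]

lemma IsRedSeq.isCoredSeq_reverse {L : List (Op α)} (hS : IsComplex S) (hL : IsRedSeq S L)
    (hex : remaining S L = ∅) : IsCoredSeq S L.reverse ∧ remaining S L.reverse = ∅ := by
  induction L generalizing S with
  | nil => exact ⟨trivial, hex⟩
  | cons o L ih =>
    obtain ⟨ho, hL⟩ := hL
    have hA := IsRedSeq.upClosedIn_simplices hS ⟨ho, trivial⟩
    rw [removeOp_eq_sdiff] at hL
    rw [remaining_cons, removeOp_eq_sdiff] at hex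
    obtain ⟨hrev, hrevex⟩ := ih (hS.sdiff hA) hL hex
    obtain ⟨hrev', hrem⟩ := hrev.of_sdiff_upClosedIn hA
    rw [hrevex, Set.empty_union] at hrem
    rw [List.reverse_cons, remaining_append, hrem]
    exact ⟨hrev'.append (hrem ▸ IsRedSeq.isCoredSeq_simplices ⟨ho, trivial⟩),
      (removeOp_eq_sdiff _ o).trans Set.sdiff_self⟩

theorem reduction_seq_reverse_is_coreduction_seq_general {α : Type*}
    (S : Set (Finset α)) (hS : IsComplex S)
    (L : List (Op α)) (hL : IsRedSeq S L) (hex : remaining S L = ∅) :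
    IsCoredSeq S L.reverse ∧ remaining S L.reverse = ∅ ∧
    (∀ p : Finset α × Finset α, Sum.inl p ∈ L.reverse ↔ Sum.inl p ∈ L) ∧
    (∀ σ : Finset α, Sum.inr σ ∈ L.reverse ↔ Sum.inr σ ∈ L) := by
  obtain ⟨hrev, hrevex⟩ := hL.isCoredSeq_reverse hS hex
  exact ⟨hrev, hrevex, fun _ => List.mem_reverse, fun _ => List.mem_reverse⟩

/-- Proposition 1, forward direction: the reverse of an exhausting reduction-based
removal sequence on a finite simplicial complex is an exhausting coreduction-based
removal sequence, producing the same set of pairs and of single (critical)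
simplices. -/
theorem reduction_seq_reverse_is_coreduction_seq {α : Type*} [DecidableEq α]
    (S : Set (Finset α)) (hS : IsComplex S) (hfin : S.Finite)
    (L : List (Op α)) (hL : IsRedSeq S L) (hex : remaining S L = ∅) :
    IsCoredSeq S L.reverse ∧ remaining S L.reverse = ∅ ∧
    (∀ p : Finset α × Finset α, Sum.inl p ∈ L.reverse ↔ Sum.inl p ∈ L) ∧
    (∀ σ : Finset α, Sum.inr σ ∈ L.reverse ↔ Sum.inr σ ∈ L) :=
  reduction_seq_reverse_is_coreduction_seq_general S hS L hL hex
end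

section
/- Let Σ be a finite simplicial complex and let L be a valid interleaved removal sequence on Σ. Let V be the set of pairs removed by L. Then V is a discrete vector field (each simplex of Σ occurs in at most one pair of V) and V admits no closed V-path; hence V is a Forman gradient. (Proposition 2: the discrete vector field produced by any interleaved-based algorithm is a Forman gradient.) -/
open Finset

variable {α : Type*}

/-!
A simplex removed by an operation is absent from every later remaining family, so no simplex
lies in two removed pairs. For a closed `V`-path, look at the pair `(σ, τ)` of the path that is
removed first: all pairs of the path are still present at that moment. If `(σ, τ)` is a
coreduction pair, the face `σ'` that the path enters after `τ` lies in `bd τ = {σ}`, contradicting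
`σ' ≠ σ`; if it is a reduction pair, the coface `τ'` from which the path enters `σ` lies in
`cbd σ = {τ}`, so the preceding pair shares `τ` with `(σ, τ)` and is that pair, contradicting
`σ ≠ σ'`. By induction on the sequence, "removed first" is just "the head of the list".
-/

namespace List

variable {β : Type*} {R : β → β → Prop}

theorem IsChain.exists_rel_of_mem_dropLast {l : List β} (h : l.IsChain R) {a : β}
    (ha : a ∈ l.dropLast) : ∃ b ∈ l, R a b := by
  induction l with
  | nil => simp at ha
  | cons x t ih =>
    cases t with
    | nil => simp at ha
    | cons y t =>
      rw [dropLast_cons_cons, mem_cons] at ha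
      rcases ha with rfl | ha
      · exact ⟨y, by simp, h.rel⟩
      · obtain ⟨b, hb, hab⟩ := ih h.tail ha
        exact ⟨b, mem_cons_of_mem x hb, hab⟩

theorem IsChain.exists_rel_of_mem_tail {l : List β} (h : l.IsChain R) {b : β}
    (hb : b ∈ l.tail) : ∃ a ∈ l, R a b := by
  induction l with
  | nil => simp at hb
  | cons x t ih =>
    cases t with
    | nil => simp at hb
    | cons y t =>
      rw [tail_cons, mem_cons] at hb
      rcases hb with rfl | hb
      · exact ⟨x, by simp, h.rel⟩
      · obtain ⟨a, ha, hab⟩ := ih h.tail hb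
        exact ⟨a, mem_cons_of_mem x ha, hab⟩

end List

namespace IsClosedVPath

variable {V : Set (Finset α × Finset α)} {P : List (Finset α × Finset α)}

theorem exists_next (hP : IsClosedVPath V P) {p : Finset α × Finset α} (hp : p ∈ P) :
    ∃ q ∈ P, ImmFace q.1 p.2 ∧ q.1 ≠ p.1 := by
  obtain ⟨hne, ⟨-, -, hchain⟩, hclose⟩ := hP
  have hcycle : (P ++ [P.head hne]).IsChain (fun p q => ImmFace q.1 p.2 ∧ q.1 ≠ p.1) :=
    hchain.append (.singleton _) (by simpa [List.getLast?_eq_some_getLast hne] using hclose)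
  obtain ⟨q, hq, hpq⟩ := hcycle.exists_rel_of_mem_dropLast (by simpa using hp)
  refine ⟨q, ?_, hpq⟩
  simp only [List.mem_append, List.mem_singleton] at hq
  rcases hq with hq | rfl
  exacts [hq, List.head_mem hne]

theorem exists_prev (hP : IsClosedVPath V P) {q : Finset α × Finset α} (hq : q ∈ P) :
    ∃ p ∈ P, ImmFace q.1 p.2 ∧ q.1 ≠ p.1 := by
  obtain ⟨hne, ⟨-, -, hchain⟩, hclose⟩ := hP
  have hcycle : (P.getLast hne :: P).IsChain (fun p q => ImmFace q.1 p.2 ∧ q.1 ≠ p.1) :=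
    hchain.cons_of_ne_nil hne hclose
  obtain ⟨p, hp, hpq⟩ := hcycle.exists_rel_of_mem_tail hq
  refine ⟨p, ?_, hpq⟩
  rcases List.mem_cons.1 hp with rfl | hp
  exacts [List.getLast_mem hne, hp]

end IsClosedVPath

section ClosedPaths

variable {S : Set (Finset α)} {σ τ : Finset α} {V : Set (Finset α × Finset α)}
  {P : List (Finset α × Finset α)}

theorem CoredPair.not_mem_of_isClosedVPath (h : CoredPair S σ τ) (hP : IsClosedVPath V P)
    (hS : ∀ q ∈ P, q.1 ∈ S) : (σ, τ) ∉ P := by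
  intro hmem
  obtain ⟨q, hq, hface, hne⟩ := hP.exists_next hmem
  have hbd : q.1 ∈ bd S τ := ⟨hS q hq, hface⟩
  rw [h.2.2.2] at hbd
  exact hne hbd

theorem RedPair.not_mem_of_isClosedVPath (h : RedPair S σ τ) (hP : IsClosedVPath V P)
    (hS : ∀ q ∈ P, q.2 ∈ S) (hτ : ∀ q ∈ P, q.2 = τ → q = (σ, τ)) : (σ, τ) ∉ P := by
  intro hmem
  obtain ⟨q, hq, hface, hne⟩ := hP.exists_prev hmem
  have hcbd : q.2 ∈ cbd S σ := ⟨hS q hq, hface⟩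
  rw [h.2.2.2] at hcbd
  exact hne (by rw [hτ q hq hcbd])

end ClosedPaths

theorem removeOp_subset (S : Set (Finset α)) (o : Op α) : removeOp S o ⊆ S := by
  rcases o with ⟨σ, τ⟩ | σ <;> exact Set.sdiff_subset

theorem removeOp_inl (S : Set (Finset α)) (p : Finset α × Finset α) :
    removeOp S (Sum.inl p) = S \ {p.1, p.2} := by
  cases p; rfl

namespace IsInterSeq

variable {S : Set (Finset α)} {L : List (Op α)} {p q : Finset α × Finset α}

theorem mem_of_inl_mem (hL : IsInterSeq S L) (hp : Sum.inl p ∈ L) :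
    p.1 ∈ S ∧ p.2 ∈ S ∧ ImmFace p.1 p.2 := by
  induction L generalizing S with
  | nil => simp at hp
  | cons o L ih =>
    rcases List.mem_cons.1 hp with rfl | hp
    · rcases hL.1 with h | h
      exacts [⟨h.1, h.2.1, h.2.2.1⟩, ⟨h.1, h.2.1, h.2.2.1⟩]
    · obtain ⟨h₁, h₂, hface⟩ := ih hL.2 hp
      exact ⟨removeOp_subset S o h₁, removeOp_subset S o h₂, hface⟩

theorem ne_of_inl_mem_tail (hL : IsInterSeq S (Sum.inl p :: L)) (hq : Sum.inl q ∈ L)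
    {x : Finset α} (hx : x = q.1 ∨ x = q.2) : x ≠ p.1 ∧ x ≠ p.2 := by
  obtain ⟨h₁, h₂, -⟩ := hL.2.mem_of_inl_mem hq
  rw [removeOp_inl] at h₁ h₂
  rcases hx with rfl | rfl
  · simpa [not_or] using h₁.2
  · simpa [not_or] using h₂.2

theorem eq_of_inl_mem (hL : IsInterSeq S L) (hp : Sum.inl p ∈ L) (hq : Sum.inl q ∈ L)
    {x : Finset α} (hxp : x = p.1 ∨ x = p.2) (hxq : x = q.1 ∨ x = q.2) : p = q := by
  induction L generalizing S with
  | nil => simp at hp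
  | cons o L ih =>
    rcases List.mem_cons.1 hp with rfl | hpL <;> rcases List.mem_cons.1 hq with hqo | hqL
    · exact (Sum.inl_injective hqo).symm
    · have := hL.ne_of_inl_mem_tail hqL hxq
      tauto
    · subst hqo
      have := hL.ne_of_inl_mem_tail hpL hxp
      tauto
    · exact ih hL.2 hpL hqL

theorem isDVF (hL : IsInterSeq S L) : IsDVF S {p | Sum.inl p ∈ L} :=
  ⟨fun _ hp => hL.mem_of_inl_mem hp, fun _ _ _ hp _ hq hxp hxq => hL.eq_of_inl_mem hp hq hxp hxq⟩

theorem not_forall_inl_mem_of_isClosedVPath (hL : IsInterSeq S L)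
    {V : Set (Finset α × Finset α)} {P : List (Finset α × Finset α)} (hP : IsClosedVPath V P) :
    ¬ ∀ p ∈ P, Sum.inl p ∈ L := by
  induction L generalizing S with
  | nil =>
    obtain ⟨hne, -⟩ := hP
    exact fun hPL => by simpa using hPL _ (List.head_mem hne)
  | cons o L ih =>
    intro hPL
    by_cases hPL' : ∀ p ∈ P, Sum.inl p ∈ L
    · exact ih hL.2 hPL'
    push Not at hPL'
    obtain ⟨⟨σ, τ⟩, hmem, hnot⟩ := hPL'
    obtain rfl : Sum.inl (σ, τ) = o := (List.mem_cons.1 (hPL _ hmem)).resolve_right hnot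
    have hS q (hq : q ∈ P) := hL.mem_of_inl_mem (hPL q hq)
    rcases hL.1 with hcored | hred
    · exact hcored.not_mem_of_isClosedVPath hP (fun q hq => (hS q hq).1) hmem
    · refine hred.not_mem_of_isClosedVPath hP (fun q hq => (hS q hq).2.1)
        (fun q hq hqτ => ?_) hmem
      exact hL.eq_of_inl_mem (hPL q hq) List.mem_cons_self (x := τ) (Or.inr hqτ.symm) (Or.inr rfl)

end IsInterSeq

theorem interleaved_produces_forman_gradient_general {α : Type*}
    (S : Set (Finset α))
    (L : List (Op α)) (hL : IsInterSeq S L) :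
    IsDVF S {p : Finset α × Finset α | Sum.inl p ∈ L} ∧
    ∀ P : List (Finset α × Finset α),
      ¬ IsClosedVPath {p : Finset α × Finset α | Sum.inl p ∈ L} P := by
  exact ⟨hL.isDVF, fun _ hP => hL.not_forall_inl_mem_of_isClosedVPath hP hP.2.1.2.1⟩

/-- Proposition 2: the set of pairs removed by a valid interleaved removal sequence
is a discrete vector field with no closed `V`-path, hence a Forman gradient. -/
theorem interleaved_produces_forman_gradient {α : Type*} [DecidableEq α]
    (S : Set (Finset α)) (hS : IsComplex S) (hfin : S.Finite)
    (L : List (Op α)) (hL : IsInterSeq S L) :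
    IsDVF S {p : Finset α × Finset α | Sum.inl p ∈ L} ∧
    ∀ P : List (Finset α × Finset α),
      ¬ IsClosedVPath {p : Finset α × Finset α | Sum.inl p ∈ L} P :=
  interleaved_produces_forman_gradient_general S L hL
end
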